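/- arXiv:2305.09149 — 9 statements merged into one kernel-verified Lean document; each statement's English description precedes it below -/
import Mathlib

section
/- Let R = (R¹, R²) : U → ℝⁿ × ℝⁿ be a C² discretization map on ℝⁿ, let X : ℝⁿ → ℝⁿ be a C¹ vector field, and let γ : ℝ → ℝⁿ be a C² curve with γ(0) = x₀ and γ'(t) = X(γ(t)) for all t. Suppose ε > 0 and z, v : (−ε, ε) → ℝⁿ are C¹ maps such that for every h ∈ (−ε, ε): (z(h), v(h)) ∈ U, v(h) = h · X(z(h)), and R¹(z(h), v(h)) = x₀. Define Φ(h) := R²(z(h), v(h)). Then the one-step error Φ(h) − γ(h) is O(h²) as h → 0, i.e. the discretization defined by R⁻¹(x_k, x_{k+1}) = h X(τ(R⁻¹(x_k, x_{k+1}))) is a first-order integrator for X. -/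
/-! The defect `ψ q = R² q - R¹ q - q.2` of a C² discretization map vanishes to second order at
`(x₀, 0)`: it is zero on `v = 0`, and its `v`-derivative there is `id - id`. Since
`R¹(z h, v h) = x₀` and `v h = h X(z h)`, the discrete step is `Φ h = x₀ + h X(z h) + ψ(z h, v h)`,
while Taylor gives `γ h = x₀ + h X(x₀) + O(h²)`. The path `h ↦ (z h, v h)` leaves `(x₀, 0)` at
speed `O(1)`, so `ψ(z h, v h) = O(h²)`, and `h (X(z h) - X x₀) = O(h²)` since `X ∘ z` is
differentiable. -/

open Topology Asymptotics

noncomputable section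

/-- A discretization map on ℝⁿ. -/
def IsDiscretizationMap (n : ℕ) (U : Set ((Fin n → ℝ) × (Fin n → ℝ)))
    (R : (Fin n → ℝ) × (Fin n → ℝ) → (Fin n → ℝ) × (Fin n → ℝ)) : Prop :=
  IsOpen U ∧
  (∀ x : Fin n → ℝ, (x, (0 : Fin n → ℝ)) ∈ U) ∧
  (∀ x : Fin n → ℝ, R (x, 0) = (x, x)) ∧
  (∀ x : Fin n → ℝ,
    fderiv ℝ (fun v : Fin n → ℝ => (R (x, v)).2 - (R (x, v)).1) 0
      = ContinuousLinearMap.id ℝ (Fin n → ℝ))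

open Filter Metric

theorem Asymptotics.IsBigO.comp_isBigO_sub_sq {α E F : Type*} [NormedAddCommGroup E] [Norm F]
    {l : Filter α} {ψ : E → F} {y₀ : E} (hψ : ψ =O[𝓝 y₀] fun y => ‖y - y₀‖ ^ 2)
    {p : α → E} {g : α → ℝ} (hp : (fun t => p t - y₀) =O[l] g) (hg : Tendsto g l (𝓝 0)) :
    (fun t => ψ (p t)) =O[l] fun t => g t ^ 2 :=
  (hψ.comp_tendsto (tendsto_sub_nhds_zero_iff.1 (hp.trans_tendsto hg))).trans (hp.norm_left.pow 2)

section Asymptotics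

variable {E F : Type*} [NormedAddCommGroup E] [NormedSpace ℝ E] [NormedAddCommGroup F]
  [NormedSpace ℝ F]

theorem ContDiffAt.isBigO_norm_sub_sq {f : E → F} {y₀ : E} (hf : ContDiffAt ℝ 2 f y₀)
    (h0 : f y₀ = 0) (h1 : fderiv ℝ f y₀ = 0) : f =O[𝓝 y₀] fun y => ‖y - y₀‖ ^ 2 := by
  have hdiff : ∀ᶠ y in 𝓝 y₀, DifferentiableAt ℝ f y :=
    (hf.eventually (by simp)).mono fun y hy => hy.differentiableAt (by simp)
  have hf' : fderiv ℝ f =O[𝓝 y₀] fun y => y - y₀ := by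
    simpa [h1] using ((hf.fderiv_right (m := 1) le_rfl).differentiableAt one_ne_zero).isBigO_sub
  obtain ⟨C, hC0, hC⟩ := hf'.exists_nonneg
  obtain ⟨r, hr, hball⟩ := Metric.eventually_nhds_iff_ball.1 (hdiff.and hC.bound)
  refine isBigO_iff.2 ⟨C, ?_⟩
  filter_upwards [ball_mem_nhds y₀ hr] with y hy
  have hsub : closedBall y₀ ‖y - y₀‖ ⊆ ball y₀ r :=
    closedBall_subset_ball (by rwa [← dist_eq_norm])
  have hmv := (convex_closedBall y₀ ‖y - y₀‖).norm_image_sub_le_of_norm_fderiv_le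
    (fun x hx => (hball x (hsub hx)).1)
    (fun x hx => (hball x (hsub hx)).2.trans
      (mul_le_mul_of_nonneg_left (mem_closedBall_iff_norm.1 hx) hC0))
    (mem_closedBall_self (norm_nonneg _)) (mem_closedBall_iff_norm.2 le_rfl)
  rw [norm_pow, norm_norm, sq, ← mul_assoc]
  simpa [h0] using hmv

theorem ContDiffAt.isBigO_sub_sub_smul_deriv {γ : ℝ → E} {t : ℝ} (hγ : ContDiffAt ℝ 2 γ t) :
    (fun s => γ s - γ t - (s - t) • deriv γ t) =O[𝓝 t] fun s => (s - t) ^ 2 := by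
  have hd : HasDerivAt (fun s => γ s - γ t - (s - t) • deriv γ t)
      (deriv γ t - (1 : ℝ) • deriv γ t) t :=
    ((hγ.differentiableAt (by simp)).hasDerivAt.sub_const (γ t)).sub
      (((hasDerivAt_id t).sub_const t).smul_const (deriv γ t))
  rw [one_smul, sub_self] at hd
  have hf : ContDiffAt ℝ 2 (fun s => γ s - γ t - (s - t) • deriv γ t) t := by fun_prop
  simpa [Real.norm_eq_abs] using hf.isBigO_norm_sub_sq (by simp) (by simp [hd.hasFDerivAt.fderiv])

theorem DifferentiableAt.isBigO_smul_sub_sq {f : ℝ → E} (hf : DifferentiableAt ℝ f 0) :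
    (fun h : ℝ => h • (f h - f 0)) =O[𝓝 0] fun h => h ^ 2 := by
  refine ((isBigO_refl (fun h : ℝ => h) (𝓝 0)).smul (by simpa using hf.isBigO_sub)).congr_right
    fun h => ?_
  rw [smul_eq_mul, sq]

end Asymptotics

section Discretization

variable {n : ℕ} {U : Set ((Fin n → ℝ) × (Fin n → ℝ))}
  {R : (Fin n → ℝ) × (Fin n → ℝ) → (Fin n → ℝ) × (Fin n → ℝ)}

def discretizationDefect (R : (Fin n → ℝ) × (Fin n → ℝ) → (Fin n → ℝ) × (Fin n → ℝ))
    (q : (Fin n → ℝ) × (Fin n → ℝ)) : Fin n → ℝ :=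
  (R q).2 - (R q).1 - q.2

theorem IsDiscretizationMap.discretizationDefect_zero (hR : IsDiscretizationMap n U R)
    (x : Fin n → ℝ) : discretizationDefect R (x, 0) = 0 := by
  simp [discretizationDefect, hR.2.2.1]

theorem IsDiscretizationMap.fderiv_discretizationDefect (hR : IsDiscretizationMap n U R)
    {x : Fin n → ℝ} (hd : DifferentiableAt ℝ (discretizationDefect R) (x, 0)) :
    fderiv ℝ (discretizationDefect R) (x, 0) = 0 := by
  set L := fderiv ℝ (discretizationDefect R) (x, 0)
  have hL : HasFDerivAt (discretizationDefect R) L (x, 0) := hd.hasFDerivAt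
  have hinl : L ∘L .inl ℝ _ _ = 0 := by
    have hconst : (discretizationDefect R ∘ fun y => (y, 0)) = fun _ => 0 :=
      funext fun y => hR.discretizationDefect_zero y
    have h := hL.comp x (hasFDerivAt_prodMk_left (𝕜 := ℝ) x (0 : Fin n → ℝ))
    rw [hconst] at h
    exact h.unique (hasFDerivAt_const (0 : Fin n → ℝ) x)
  have hinr : L ∘L .inr ℝ _ _ = 0 := by
    have hsum : (discretizationDefect R ∘ fun w => (x, w)) + id
        = fun w => (R (x, w)).2 - (R (x, w)).1 :=
      funext fun w => by simp [discretizationDefect]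
    have h := (hL.comp 0 (hasFDerivAt_prodMk_right x 0)).add (hasFDerivAt_id 0)
    rw [hsum] at h
    simpa [hR.2.2.2 x] using h.fderiv.symm
  rw [← L.coprod_comp_inl_inr, hinl, hinr]
  ext <;> simp

theorem IsDiscretizationMap.discretizationDefect_isBigO (hR : IsDiscretizationMap n U R)
    (hRC2 : ContDiffOn ℝ 2 R U) (x : Fin n → ℝ) :
    discretizationDefect R =O[𝓝 (x, 0)] fun q => ‖q - (x, 0)‖ ^ 2 := by
  have hRx : ContDiffAt ℝ 2 R (x, 0) := hRC2.contDiffAt (hR.1.mem_nhds (hR.2.1 x))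
  have hψ : ContDiffAt ℝ 2 (discretizationDefect R) (x, 0) :=
    (hRx.snd.sub hRx.fst).sub contDiffAt_snd
  exact hψ.isBigO_norm_sub_sq (hR.discretizationDefect_zero x)
    (hR.fderiv_discretizationDefect (hψ.differentiableAt (by simp)))

end Discretization

theorem discretization_is_first_order_general
    {n : ℕ} (U : Set ((Fin n → ℝ) × (Fin n → ℝ)))
    (R : (Fin n → ℝ) × (Fin n → ℝ) → (Fin n → ℝ) × (Fin n → ℝ))
    (hR : IsDiscretizationMap n U R)
    (hRC2 : ContDiffOn ℝ 2 R U)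
    (X : (Fin n → ℝ) → (Fin n → ℝ)) (hX : ContDiff ℝ 1 X)
    (γ : ℝ → (Fin n → ℝ)) (hγ : ContDiff ℝ 2 γ)
    (x₀ : Fin n → ℝ) (hγ0 : γ 0 = x₀)
    (hode : ∀ t : ℝ, deriv γ t = X (γ t))
    (ε : ℝ) (hε : 0 < ε)
    (z v : ℝ → (Fin n → ℝ))
    (hz : ContDiffOn ℝ 1 z (Set.Ioo (-ε) ε))
    (hveq : ∀ h ∈ Set.Ioo (-ε) ε, v h = h • X (z h))
    (hfix : ∀ h ∈ Set.Ioo (-ε) ε, (R (z h, v h)).1 = x₀) :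
    (fun h : ℝ => (R (z h, v h)).2 - γ h) =O[𝓝 (0 : ℝ)] fun h : ℝ => h ^ 2 := by
  have hI : Set.Ioo (-ε) ε ∈ 𝓝 (0 : ℝ) := Ioo_mem_nhds (neg_lt_zero.2 hε) hε
  have hv0 : v 0 = 0 := by simpa using hveq 0 (mem_of_mem_nhds hI)
  have hz0 : z 0 = x₀ := by simpa [hv0, hR.2.2.1] using hfix 0 (mem_of_mem_nhds hI)
  have hzd : DifferentiableAt ℝ z 0 := (hz.contDiffAt hI).differentiableAt one_ne_zero
  have hXz : DifferentiableAt ℝ (X ∘ z) 0 := (hX.differentiable one_ne_zero _).comp 0 hzd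
  have hpath : (fun h => (z h, v h) - (x₀, 0)) =O[𝓝 0] fun h => h := by
    refine IsBigO.prod_left (by simpa [hz0] using hzd.isBigO_sub) ?_
    have hbounded := hXz.continuousAt.tendsto.isBigO_one ℝ
    refine ((isBigO_refl (fun h : ℝ => h) (𝓝 0)).smul hbounded).congr' ?_ (by simp)
    filter_upwards [hI] with h hh using by simp [hveq h hh]
  have hdefect := (hR.discretizationDefect_isBigO hRC2 x₀).comp_isBigO_sub_sq hpath tendsto_id
  have hflow : (fun h => γ h - γ 0 - h • deriv γ 0) =O[𝓝 0] fun h : ℝ => h ^ 2 := by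
    simpa using (hγ.contDiffAt (x := 0)).isBigO_sub_sub_smul_deriv
  refine ((hdefect.add hXz.isBigO_smul_sub_sq).sub hflow).congr' ?_ EventuallyEq.rfl
  filter_upwards [hI] with h hh
  simp only [discretizationDefect, Function.comp_apply, hfix h hh, hz0, hγ0, hode]
  rw [hveq h hh, smul_sub]
  abel

/-- the discretization `R⁻¹(x_k, x_{k+1}) = h X(τ(R⁻¹(x_k, x_{k+1})))`
obtained from a C² discretization map `R` is a first-order integrator: the one-step
error `Φ(h) − γ(h)` is `O(h²)` as `h → 0`, where `γ` is the exact flow of `X` from `x₀`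
and `Φ(h) = R²(z(h), v(h))` with `R¹(z(h), v(h)) = x₀` and `v(h) = h • X(z(h))`. -/
theorem discretization_is_first_order
    {n : ℕ} (U : Set ((Fin n → ℝ) × (Fin n → ℝ)))
    (R : (Fin n → ℝ) × (Fin n → ℝ) → (Fin n → ℝ) × (Fin n → ℝ))
    (hR : IsDiscretizationMap n U R)
    (hRC2 : ContDiffOn ℝ 2 R U)
    (X : (Fin n → ℝ) → (Fin n → ℝ)) (hX : ContDiff ℝ 1 X)
    (γ : ℝ → (Fin n → ℝ)) (hγ : ContDiff ℝ 2 γ)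
    (x₀ : Fin n → ℝ) (hγ0 : γ 0 = x₀)
    (hode : ∀ t : ℝ, deriv γ t = X (γ t))
    (ε : ℝ) (hε : 0 < ε)
    (z v : ℝ → (Fin n → ℝ))
    (hz : ContDiffOn ℝ 1 z (Set.Ioo (-ε) ε))
    (hv : ContDiffOn ℝ 1 v (Set.Ioo (-ε) ε))
    (hmem : ∀ h ∈ Set.Ioo (-ε) ε, (z h, v h) ∈ U)
    (hveq : ∀ h ∈ Set.Ioo (-ε) ε, v h = h • X (z h))
    (hfix : ∀ h ∈ Set.Ioo (-ε) ε, (R (z h, v h)).1 = x₀) :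
    (fun h : ℝ => (R (z h, v h)).2 - γ h) =O[𝓝 (0 : ℝ)] fun h : ℝ => h ^ 2 :=
  discretization_is_first_order_general U R hR hRC2 X hX γ hγ x₀ hγ0 hode ε hε z v hz hveq hfix
end
end

section
/- Let R = (R¹, R²) : U → ℝⁿ × ℝⁿ be a C³ discretization map on ℝⁿ that is symmetric, i.e. R = R* where R*(x, v) := (R²(x, −v), R¹(x, −v)). Let X : ℝⁿ → ℝⁿ be a C² vector field and let γ : ℝ → ℝⁿ be a C³ curve with γ(0) = x₀ and γ'(t) = X(γ(t)) for all t. Suppose ε > 0 and z, v : (−ε, ε) → ℝⁿ are C² maps such that for every h ∈ (−ε, ε): (z(h), v(h)) ∈ U, v(h) = h · X(z(h)), and R¹(z(h), v(h)) = x₀. Define Φ(h) := R²(z(h), v(h)). Then the one-step error Φ(h) − γ(h) is O(h³) as h → 0, i.e. a symmetric discretization map yields a second-order integrator for X. -/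
/-!
Put `D(x, v) = R²(x, v) - R¹(x, v) - v` and `Θ(x, v) = R¹(x, v) - x + v / 2`. Both vanish on the
zero section `v = 0` together with their first derivatives (for `Θ` because the symmetry forces
`∂ᵥR¹(x, 0) = -1/2`). The symmetry also makes `D` odd in `v`, which kills the `vv`-block of its
Hessian at `(x₀, 0)`, while the other blocks vanish because `D` is flat along the zero section.
So `D = O(‖(x, v) - (x₀, 0)‖³)` and `Θ = O(‖(x, v) - (x₀, 0)‖²)`. Along `(z(h), v(h))`, which is
`O(h)`-close to `(x₀, 0)`, this reads `Φ(h) = x₀ + h X(z(h)) + O(h³)` with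
`z(h) = x₀ + (h/2) X(z(h)) + O(h²)`: up to these errors one step of the implicit midpoint rule,
which is of second order since `γ(h) = γ(0) + h γ'(h/2) + O(h³)`.
-/

open Topology Asymptotics

noncomputable section

open Filter Set Metric ContinuousLinearMap

theorem Asymptotics.IsBigO.comp_pow_of_isBigO_sub {E F : Type*} [NormedAddCommGroup E]
    [NormedAddCommGroup F] {f : E → F} {p : E} {k : ℕ}
    (hf : f =O[𝓝 p] fun y => ‖y - p‖ ^ k) {c : ℝ → E} (hc : (fun t => c t - p) =O[𝓝 0] fun t => t) :
    (fun t => f (c t)) =O[𝓝 0] fun t => t ^ k := by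
  have hct : Tendsto c (𝓝 0) (𝓝 p) := by
    simpa using (hc.trans_tendsto tendsto_id).add_const p
  refine (hf.comp_tendsto hct).trans ?_
  simpa [Function.comp_def] using hc.norm_left.pow k

theorem Asymptotics.IsBigO.comp_half {F : Type*} [NormedAddCommGroup F] {f : ℝ → F} {k : ℕ}
    (hf : f =O[𝓝 0] fun t => t ^ k) :
    (fun t => f (t / 2)) =O[𝓝 0] fun t => t ^ k := by
  refine (hf.comp_tendsto (by simpa using (continuous_id.div_const (2 : ℝ)).tendsto 0)).trans ?_
  simpa [Function.comp_def, div_eq_inv_mul, mul_pow] using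
    (isBigO_refl (fun t : ℝ => t ^ k) _).const_mul_left ((2⁻¹ : ℝ) ^ k)

section FlatJets

variable {E F : Type*} [NormedAddCommGroup E] [NormedSpace ℝ E]
  [NormedAddCommGroup F] [NormedSpace ℝ F]

theorem isBigO_sub_pow_succ_of_hasFDerivAt {f : E → F} {f' : E → E →L[ℝ] F} {p : E} {k : ℕ}
    (hf : ∀ᶠ y in 𝓝 p, HasFDerivAt f (f' y) y) (hf' : f' =O[𝓝 p] fun y => ‖y - p‖ ^ k) :
    (fun y => f y - f p) =O[𝓝 p] fun y => ‖y - p‖ ^ (k + 1) := by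
  obtain ⟨C, hC0, hC⟩ := hf'.exists_nonneg
  obtain ⟨r, hr, hball⟩ := Metric.mem_nhds_iff.mp (hf.and hC.bound)
  refine .of_bound C (eventually_of_mem (ball_mem_nhds p hr) fun x hx => ?_)
  have hsub : closedBall p ‖x - p‖ ⊆ ball p r :=
    closedBall_subset_ball (by rwa [mem_ball, dist_eq_norm] at hx)
  have hbound : ∀ y ∈ closedBall p ‖x - p‖, ‖f' y‖ ≤ C * ‖x - p‖ ^ k := fun y hy => by
    have hy' : ‖y - p‖ ≤ ‖x - p‖ := by rwa [mem_closedBall, dist_eq_norm] at hy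
    calc ‖f' y‖ ≤ C * ‖‖y - p‖ ^ k‖ := (hball (hsub hy)).2
      _ ≤ C * ‖x - p‖ ^ k := by rw [norm_pow, norm_norm]; gcongr
  have := (convex_closedBall p ‖x - p‖).norm_image_sub_le_of_norm_hasFDerivWithin_le
    (fun y hy => (hball (hsub hy)).1.hasFDerivWithinAt) hbound
    (mem_closedBall_self (norm_nonneg _)) (by rw [mem_closedBall, dist_eq_norm])
  rw [norm_pow, norm_norm, pow_succ, ← mul_assoc]
  exact this

theorem ContDiffAt.isBigO_sub_sq {f : E → F} {p : E} (hf : ContDiffAt ℝ 2 f p)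
    (h1 : fderiv ℝ f p = 0) :
    (fun y => f y - f p) =O[𝓝 p] fun y => ‖y - p‖ ^ 2 := by
  refine isBigO_sub_pow_succ_of_hasFDerivAt (f' := fderiv ℝ f) (k := 1) ?_ ?_
  · filter_upwards [hf.eventually (by simp)] with y hy
    exact (hy.differentiableAt (by norm_num)).hasFDerivAt
  · have := ((hf.fderiv_right (m := 1) le_rfl).differentiableAt one_ne_zero).isBigO_sub
    simpa [h1] using this.norm_right

theorem ContDiffAt.isBigO_sub_cube {f : E → F} {p : E} (hf : ContDiffAt ℝ 3 f p)
    (h1 : fderiv ℝ f p = 0) (h2 : fderiv ℝ (fderiv ℝ f) p = 0) :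
    (fun y => f y - f p) =O[𝓝 p] fun y => ‖y - p‖ ^ 3 := by
  refine isBigO_sub_pow_succ_of_hasFDerivAt (f' := fderiv ℝ f) (k := 2) ?_ ?_
  · filter_upwards [hf.eventually (by simp)] with y hy
    exact (hy.differentiableAt (by norm_num)).hasFDerivAt
  · simpa [h1] using (hf.fderiv_right (m := 2) le_rfl).isBigO_sub_sq h2

end FlatJets

section Parity

variable {E F G : Type*} [NormedAddCommGroup E] [NormedSpace ℝ E]
  [NormedAddCommGroup F] [NormedSpace ℝ F] [NormedAddCommGroup G] [NormedSpace ℝ G]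

theorem iteratedFDeriv_apply_comp_of_comp_eventuallyEq {f g : E → F} (L : E ≃L[ℝ] E) {p : E}
    (hp : L p = p) (h : f ∘ L =ᶠ[𝓝 p] g) (k : ℕ) (m : Fin k → E) :
    iteratedFDeriv ℝ k f p (fun i => L (m i)) = iteratedFDeriv ℝ k g p m := by
  have hL := L.iteratedFDerivWithin_comp_right f uniqueDiffOn_univ (mem_univ (L p)) k
  simp only [preimage_univ, iteratedFDerivWithin_univ, hp] at hL
  rw [← (h.iteratedFDeriv ℝ k).eq_of_nhds, hL]
  rfl

theorem fderiv_comp_inl {f : E × F → G} {x : E} {w : F} (hf : DifferentiableAt ℝ f (x, w)) :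
    (fderiv ℝ f (x, w)).comp (inl ℝ E F) = fderiv ℝ (fun y => f (y, w)) x :=
  (hf.hasFDerivAt.comp x (hasFDerivAt_prodMk_left x w)).fderiv.symm

theorem fderiv_comp_inr {f : E × F → G} {x : E} {w : F} (hf : DifferentiableAt ℝ f (x, w)) :
    (fderiv ℝ f (x, w)).comp (inr ℝ E F) = fderiv ℝ (fun v => f (x, v)) w :=
  (hf.hasFDerivAt.comp w (hasFDerivAt_prodMk_right x w)).fderiv.symm

theorem fderiv_eq_zero_of_partial_fderiv_eq_zero {f : E × F → G} {x : E} {w : F}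
    (hf : DifferentiableAt ℝ f (x, w)) (h₁ : fderiv ℝ (fun y => f (y, w)) x = 0)
    (h₂ : fderiv ℝ (fun v => f (x, v)) w = 0) : fderiv ℝ f (x, w) = 0 :=
  prod_ext (by rw [fderiv_comp_inl hf, h₁, zero_comp]) (by rw [fderiv_comp_inr hf, h₂, zero_comp])

theorem second_fderiv_eq_zero_of_odd {f : E × F → G} {x : E} (hf : ContDiffAt ℝ 2 f (x, 0))
    (hflat : ∀ᶠ y in 𝓝 x, fderiv ℝ f (y, 0) = 0)
    (hodd : ∀ᶠ q in 𝓝 (x, (0 : F)), f (q.1, -q.2) = -f q) :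
    fderiv ℝ (fderiv ℝ f) (x, 0) = 0 := by
  set M := fderiv ℝ (fderiv ℝ f) (x, 0)
  have hinl : M.comp (inl ℝ E F) = 0 := by
    rw [fderiv_comp_inl ((hf.fderiv_right (m := 1) le_rfl).differentiableAt one_ne_zero)]
    exact (hasFDerivAt_zero_of_eventually_const 0 hflat).fderiv
  have hinr (a b : F) : M (inr ℝ E F a) (inr ℝ E F b) = 0 := by
    let σ : (E × F) ≃L[ℝ] (E × F) := (ContinuousLinearEquiv.refl ℝ E).prodCongr (.neg ℝ)
    have hσ : f ∘ σ =ᶠ[𝓝 (x, 0)] -f := by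
      filter_upwards [hodd] with q hq
      simpa [σ] using hq
    have := iteratedFDeriv_apply_comp_of_comp_eventuallyEq σ (by simp [σ]) hσ 2
      ![inr ℝ E F a, inr ℝ E F b]
    have hσinr (c : F) : σ (inr ℝ E F c) = -inr ℝ E F c := by simp [σ]
    simp only [iteratedFDeriv_two_apply, iteratedFDeriv_neg_apply, Matrix.cons_val_zero,
      Matrix.cons_val_one, hσinr, map_neg, neg_apply, neg_neg] at this
    have h2 := (two_smul ℝ _).trans (eq_neg_iff_add_eq_zero.mp this)
    exact (smul_eq_zero.mp h2).resolve_left two_ne_zero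
  have hsymm := hf.isSymmSndFDerivAt (by simp)
  refine prod_ext (by rw [hinl, zero_comp])
    (ext fun a => prod_ext (ext fun b => ?_) (ext fun b => ?_))
  · change M (inr ℝ E F a) (inl ℝ E F b) = 0
    rw [hsymm.eq]
    simpa using congr($hinl b (inr ℝ E F a))
  · exact hinr a b

end Parity

section Curves

variable {F : Type*} [NormedAddCommGroup F] [NormedSpace ℝ F]

theorem isBigO_sub_pow_succ_of_hasDerivAt {f f' : ℝ → F} {k : ℕ}
    (hf : ∀ᶠ t in 𝓝 0, HasDerivAt f (f' t) t) (hf' : f' =O[𝓝 0] fun t => t ^ k) :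
    (fun t => f t - f 0) =O[𝓝 0] fun t => t ^ (k + 1) := by
  have h := isBigO_sub_pow_succ_of_hasFDerivAt (p := 0) (k := k)
    (f' := fun t => smulRight (1 : ℝ →L[ℝ] ℝ) (f' t)) (hf.mono fun t ht => ht.hasFDerivAt)
    (isBigO_norm_left.mp (by simpa [norm_smulRight_apply] using hf'.norm_left.norm_right))
  exact isBigO_norm_right.mp (by simpa using h)

theorem ContDiff.isBigO_sub_sub_smul_deriv {f : ℝ → F} (hf : ContDiff ℝ 2 f) :
    (fun t => f t - f 0 - t • deriv f 0) =O[𝓝 0] fun t => t ^ 2 := by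
  have hderiv (t : ℝ) :
      HasDerivAt (fun t => f t - f 0 - t • deriv f 0) (deriv f t - deriv f 0) t := by
    simpa using ((hf.differentiable (by norm_num) t).hasDerivAt.sub_const (f 0)).fun_sub
      ((hasDerivAt_id' t).smul_const (deriv f 0))
  simpa using isBigO_sub_pow_succ_of_hasDerivAt (k := 1) (.of_forall hderiv)
    (by simpa using ((hf.deriv' (n := 1)).differentiable one_ne_zero 0).isBigO_sub)

theorem ContDiff.isBigO_midpoint_rule {γ : ℝ → F} (hγ : ContDiff ℝ 3 γ) :
    (fun h => γ h - γ 0 - h • deriv γ (h / 2)) =O[𝓝 0] fun h => h ^ 3 := by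
  have hγ' : ContDiff ℝ 2 (deriv γ) := hγ.deriv'
  set γ'' := deriv (deriv γ)
  set a := fun h => deriv γ h - deriv γ 0 - h • γ'' 0
  have ha : a =O[𝓝 0] fun h => h ^ 2 := hγ'.isBigO_sub_sub_smul_deriv
  have hγ''O : (fun h => γ'' h - γ'' 0) =O[𝓝 0] fun h => h ^ 1 := by
    simpa using ((hγ'.deriv' (n := 1)).differentiable one_ne_zero 0).isBigO_sub
  have hderiv (h : ℝ) : HasDerivAt (fun h => γ h - γ 0 - h • deriv γ (h / 2))
      (a h - a (h / 2) - (h / 2) • (γ'' (h / 2) - γ'' 0)) h := by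
    have hmid : HasDerivAt (fun h => deriv γ (h / 2)) ((1 / 2 : ℝ) • γ'' (h / 2)) h :=
      (hγ'.differentiable (by norm_num) _).hasDerivAt.scomp h ((hasDerivAt_id' h).div_const 2)
    convert ((hγ.differentiable (by norm_num) h).hasDerivAt.sub_const (γ 0)).fun_sub
      ((hasDerivAt_id' h).fun_smul hmid) using 1
    module
  have := isBigO_sub_pow_succ_of_hasDerivAt (k := 2) (.of_forall hderiv)
    ((ha.sub ha.comp_half).sub ?_)
  · simpa using this
  · simpa [pow_succ] using (isBigO_refl (fun h : ℝ => h ^ 1) _).comp_half.smul hγ''O.comp_half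

theorem isBigO_cube_of_implicit_midpoint {E : Type*} [NormedAddCommGroup E] [NormedSpace ℝ E]
    {X : E → E} {γ z Φ : ℝ → E} {x₀ : E}
    (hX : ContDiffAt ℝ 1 X x₀) (hγ : ContDiff ℝ 3 γ) (hγ0 : γ 0 = x₀)
    (hode : ∀ t, deriv γ t = X (γ t)) (hzO : (fun h => z h - x₀) =O[𝓝 0] fun h => h)
    (hz : (fun h => z h - x₀ - (h / 2) • X (z h)) =O[𝓝 0] fun h => h ^ 2)
    (hΦ : (fun h => Φ h - x₀ - h • X (z h)) =O[𝓝 0] fun h => h ^ 3) :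
    (fun h => Φ h - γ h) =O[𝓝 0] fun h => h ^ 3 := by
  have hzt : Tendsto z (𝓝 0) (𝓝 x₀) := by
    simpa using (hzO.trans_tendsto tendsto_id).add_const x₀
  have hγt : Tendsto (fun h => γ (h / 2)) (𝓝 0) (𝓝 x₀) := by
    simpa [Function.comp_def, hγ0] using (hγ.continuous.comp (continuous_id.div_const 2)).tendsto 0
  have hXlip := (hX.hasStrictFDerivAt one_ne_zero).isBigO_sub
  have hXz : (fun h => X (z h) - X x₀) =O[𝓝 0] fun h => h := by
    simpa [Function.comp_def] using
      (hXlip.comp_tendsto (hzt.prodMk_nhds tendsto_const_nhds)).trans hzO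
  have hγmid : (fun h => γ (h / 2) - x₀ - (h / 2) • X x₀) =O[𝓝 0] fun h => h ^ 2 := by
    simpa [hγ0, hode 0] using (hγ.of_le (by norm_num)).isBigO_sub_sub_smul_deriv.comp_half
  have hzγ : (fun h => z h - γ (h / 2)) =O[𝓝 0] fun h => h ^ 2 := by
    have hsmul : (fun h => (h / 2) • (X (z h) - X x₀)) =O[𝓝 0] fun h => h ^ 2 := by
      simpa [sq] using (isBigO_refl (fun h : ℝ => h ^ 1) _).comp_half.smul hXz
    exact ((hz.add hsmul).sub hγmid).congr_left fun h => by module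
  have hXzγ : (fun h => X (z h) - X (γ (h / 2))) =O[𝓝 0] fun h => h ^ 2 := by
    simpa [Function.comp_def] using (hXlip.comp_tendsto (hzt.prodMk_nhds hγt)).trans hzγ
  have hstep : (fun h => h • (X (z h) - X (γ (h / 2)))) =O[𝓝 0] fun h => h ^ 3 :=
    ((isBigO_refl (fun h : ℝ => h) _).smul hXzγ).congr_right fun h => by rw [smul_eq_mul]; ring
  have := (hΦ.add hstep).sub hγ.isBigO_midpoint_rule
  refine this.congr (fun h => ?_) (fun h => by ring)
  simp only [hode, hγ0]
  module

end Curves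

namespace IsDiscretizationMap

variable {n : ℕ} {U : Set ((Fin n → ℝ) × (Fin n → ℝ))}
  {R : (Fin n → ℝ) × (Fin n → ℝ) → (Fin n → ℝ) × (Fin n → ℝ)}

theorem isBigO_snd_sub_fst_sub_cube (hR : IsDiscretizationMap n U R) (hRC : ContDiffOn ℝ 3 R U)
    (hsym : ∀ p ∈ U, R p = ((R (p.1, -p.2)).2, (R (p.1, -p.2)).1)) (x : Fin n → ℝ) :
    (fun p => (R p).2 - (R p).1 - p.2) =O[𝓝 (x, 0)] fun p => ‖p - (x, 0)‖ ^ 3 := by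
  obtain ⟨hU, hU0, hR0, hRid⟩ := hR
  set D := fun p : (Fin n → ℝ) × (Fin n → ℝ) => (R p).2 - (R p).1 - p.2
  have hRC (y : Fin n → ℝ) : ContDiffAt ℝ 3 R (y, 0) := hRC.contDiffAt (hU.mem_nhds (hU0 y))
  have hDC (y : Fin n → ℝ) : ContDiffAt ℝ 3 D (y, 0) := by
    have := hRC y; fun_prop
  have hD0 (y : Fin n → ℝ) : D (y, 0) = 0 := by simp [D, hR0]
  have hflat (y : Fin n → ℝ) : fderiv ℝ D (y, 0) = 0 := by
    refine fderiv_eq_zero_of_partial_fderiv_eq_zero ((hDC y).differentiableAt (by norm_num))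
      (hasFDerivAt_zero_of_eventually_const 0 (.of_forall hD0)).fderiv ?_
    have hRd : DifferentiableAt ℝ (fun v => (R (y, v)).2 - (R (y, v)).1) 0 := by
      have := (hRC y).differentiableAt (by norm_num); fun_prop
    rw [fderiv_fun_sub hRd differentiableAt_fun_id, hRid, fderiv_fun_id, sub_self]
  have hodd : ∀ᶠ q in 𝓝 (x, 0), D (q.1, -q.2) = -D q := by
    filter_upwards [hU.mem_nhds (hU0 x)] with q hq
    simp only [D]
    rw [hsym q hq]
    abel
  simpa [hD0] using (hDC x).isBigO_sub_cube (hflat x)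
    (second_fderiv_eq_zero_of_odd ((hDC x).of_le (by norm_num)) (.of_forall hflat) hodd)

theorem isBigO_fst_sub_add_half_smul_sq (hR : IsDiscretizationMap n U R)
    (hRC : ContDiffOn ℝ 2 R U) (hsym : ∀ p ∈ U, R p = ((R (p.1, -p.2)).2, (R (p.1, -p.2)).1))
    (x : Fin n → ℝ) :
    (fun p => (R p).1 - p.1 + (2⁻¹ : ℝ) • p.2) =O[𝓝 (x, 0)] fun p => ‖p - (x, 0)‖ ^ 2 := by
  obtain ⟨hU, hU0, hR0, hRid⟩ := hR
  set Θ := fun p : (Fin n → ℝ) × (Fin n → ℝ) => (R p).1 - p.1 + (2⁻¹ : ℝ) • p.2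
  have hRC : ContDiffAt ℝ 2 R (x, 0) := hRC.contDiffAt (hU.mem_nhds (hU0 x))
  have hΘC : ContDiffAt ℝ 2 Θ (x, 0) := by fun_prop
  have hR1 : DifferentiableAt ℝ (fun v => (R (x, v)).1) 0 := by
    have := hRC.differentiableAt (by norm_num); fun_prop
  have hR2 : DifferentiableAt ℝ (fun v => (R (x, v)).2) 0 := by
    have := hRC.differentiableAt (by norm_num); fun_prop
  have hswap : fderiv ℝ (fun v => (R (x, v)).1) 0 = -fderiv ℝ (fun v => (R (x, v)).2) 0 := by
    have hev : (fun v => (R (x, v)).1) =ᶠ[𝓝 0] fun v => (R (x, (-1 : ℝ) • v)).2 := by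
      have hnear : ∀ᶠ v in 𝓝 (0 : Fin n → ℝ), (x, v) ∈ U :=
        ((continuous_const.prodMk continuous_id).tendsto' 0 (x, 0) rfl).eventually
          (hU.mem_nhds (hU0 x))
      filter_upwards [hnear] with v hv
      rw [hsym _ hv, neg_one_smul]
    rw [hev.fderiv_eq]
    simpa using fderiv_comp_smul (f := fun v => (R (x, v)).2) (x := (0 : Fin n → ℝ)) (-1 : ℝ)
  have hslice : fderiv ℝ (fun v => Θ (x, v)) 0 = 0 := by
    have hid := hRid x
    rw [fderiv_fun_sub hR2 hR1] at hid
    have hΘd : HasFDerivAt (fun v => Θ (x, v))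
        (fderiv ℝ (fun v => (R (x, v)).1) 0 + (2⁻¹ : ℝ) • ContinuousLinearMap.id ℝ _) 0 :=
      (hR1.hasFDerivAt.sub_const x).add ((hasFDerivAt_id 0).const_smul (2⁻¹ : ℝ))
    rw [hΘd.fderiv, ← hid, hswap]
    module
  simpa [Θ, hR0] using hΘC.isBigO_sub_sq (fderiv_eq_zero_of_partial_fderiv_eq_zero
    (hΘC.differentiableAt (by norm_num))
    (hasFDerivAt_zero_of_eventually_const 0 (.of_forall fun y => by simp [Θ, hR0])).fderiv hslice)

end IsDiscretizationMap

theorem symmetric_discretization_is_second_order_general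
    {n : ℕ} (U : Set ((Fin n → ℝ) × (Fin n → ℝ)))
    (R : (Fin n → ℝ) × (Fin n → ℝ) → (Fin n → ℝ) × (Fin n → ℝ))
    (hR : IsDiscretizationMap n U R)
    (hRC3 : ContDiffOn ℝ 3 R U)
    (hsym : ∀ p ∈ U, R p = ((R (p.1, -p.2)).2, (R (p.1, -p.2)).1))
    (X : (Fin n → ℝ) → (Fin n → ℝ)) (hX : ContDiff ℝ 2 X)
    (γ : ℝ → (Fin n → ℝ)) (hγ : ContDiff ℝ 3 γ)
    (x₀ : Fin n → ℝ) (hγ0 : γ 0 = x₀)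
    (hode : ∀ t : ℝ, deriv γ t = X (γ t))
    (ε : ℝ) (hε : 0 < ε)
    (z v : ℝ → (Fin n → ℝ))
    (hz : ContDiffOn ℝ 2 z (Set.Ioo (-ε) ε))
    (hveq : ∀ h ∈ Set.Ioo (-ε) ε, v h = h • X (z h))
    (hfix : ∀ h ∈ Set.Ioo (-ε) ε, (R (z h, v h)).1 = x₀) :
    (fun h : ℝ => (R (z h, v h)).2 - γ h) =O[𝓝 (0 : ℝ)] fun h : ℝ => h ^ 3 := by
  have hnear : Ioo (-ε) ε ∈ 𝓝 (0 : ℝ) := Ioo_mem_nhds (neg_lt_zero.mpr hε) hε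
  have h0 := mem_of_mem_nhds hnear
  have hz0 : z 0 = x₀ := by simpa [hveq 0 h0, hR.2.2.1] using hfix 0 h0
  have hzO : (fun h => z h - x₀) =O[𝓝 0] fun h => h := by
    simpa only [hz0, sub_zero] using ((hz.contDiffAt hnear).differentiableAt two_ne_zero).isBigO_sub
  have hXz : Tendsto (fun h => X (z h)) (𝓝 0) (𝓝 (X x₀)) :=
    hX.continuous.continuousAt.tendsto.comp <| by
      simpa using (hzO.trans_tendsto tendsto_id).add_const x₀
  have hvO : v =O[𝓝 0] fun h => h := by
    refine ((isBigO_refl (fun h : ℝ => h) _).smul (hXz.isBigO_one ℝ)).congr' ?_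
      (.of_forall fun h => mul_one h)
    filter_upwards [hnear] with h hh
    simp [hveq h hh]
  have hwO : (fun h => (z h, v h) - (x₀, 0)) =O[𝓝 0] fun h => h := by
    simpa using isBigO_prod_left.2 ⟨hzO, hvO⟩
  refine isBigO_cube_of_implicit_midpoint (hX.contDiffAt.of_le one_le_two) hγ hγ0 hode hzO ?_ ?_
  · refine ((hR.isBigO_fst_sub_add_half_smul_sq (hRC3.of_le (by norm_num)) hsym
      x₀).comp_pow_of_isBigO_sub hwO).neg_left.congr' ?_ .rfl
    filter_upwards [hnear] with h hh
    rw [hfix h hh, hveq h hh]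
    module
  · refine ((hR.isBigO_snd_sub_fst_sub_cube hRC3 hsym x₀).comp_pow_of_isBigO_sub hwO).congr' ?_ .rfl
    filter_upwards [hnear] with h hh
    rw [hfix h hh, hveq h hh]

/-- a symmetric C³ discretization map (`R = R*`, where
`R*(x,v) = (R²(x,−v), R¹(x,−v))`, in particular `U = U*`) yields a second-order
integrator: the one-step error `Φ(h) − γ(h)` is `O(h³)` as `h → 0`. -/
theorem symmetric_discretization_is_second_order
    {n : ℕ} (U : Set ((Fin n → ℝ) × (Fin n → ℝ)))
    (R : (Fin n → ℝ) × (Fin n → ℝ) → (Fin n → ℝ) × (Fin n → ℝ))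
    (hR : IsDiscretizationMap n U R)
    (hRC3 : ContDiffOn ℝ 3 R U)
    (hUsym : ∀ p : (Fin n → ℝ) × (Fin n → ℝ), p ∈ U ↔ (p.1, -p.2) ∈ U)
    (hsym : ∀ p ∈ U, R p = ((R (p.1, -p.2)).2, (R (p.1, -p.2)).1))
    (X : (Fin n → ℝ) → (Fin n → ℝ)) (hX : ContDiff ℝ 2 X)
    (γ : ℝ → (Fin n → ℝ)) (hγ : ContDiff ℝ 3 γ)
    (x₀ : Fin n → ℝ) (hγ0 : γ 0 = x₀)
    (hode : ∀ t : ℝ, deriv γ t = X (γ t))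
    (ε : ℝ) (hε : 0 < ε)
    (z v : ℝ → (Fin n → ℝ))
    (hz : ContDiffOn ℝ 2 z (Set.Ioo (-ε) ε))
    (hv : ContDiffOn ℝ 2 v (Set.Ioo (-ε) ε))
    (hmem : ∀ h ∈ Set.Ioo (-ε) ε, (z h, v h) ∈ U)
    (hveq : ∀ h ∈ Set.Ioo (-ε) ε, v h = h • X (z h))
    (hfix : ∀ h ∈ Set.Ioo (-ε) ε, (R (z h, v h)).1 = x₀) :
    (fun h : ℝ => (R (z h, v h)).2 - γ h) =O[𝓝 (0 : ℝ)] fun h : ℝ => h ^ 3 :=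
  symmetric_discretization_is_second_order_general U R hR hRC3 hsym X hX γ hγ x₀ hγ0 hode ε hε z v
    hz hveq hfix
end
end

section
/- Let R = (R¹, R²) : U → ℝⁿ × ℝⁿ be a C¹ discretization map on ℝⁿ and let φ : ℝⁿ → ℝⁿ be a C¹ diffeomorphism. Define the tangent lift Tφ(x, v) := (φ(x), Dφ(x)·v) and set R_φ := (φ × φ) ∘ R ∘ (Tφ)⁻¹, defined on the open set Tφ(U), where (Tφ)⁻¹(y, w) = (φ⁻¹(y), (Dφ(φ⁻¹(y)))⁻¹·w). Then R_φ is a discretization map on ℝⁿ: (i) R_φ(y, 0) = (y, y) for all y ∈ ℝⁿ, and (ii) for every y ∈ ℝⁿ, the Fréchet derivative at w = 0 of the map w ↦ R_φ²(y, w) − R_φ¹(y, w) is the identity map on ℝⁿ. -/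
open Topology

noncomputable section

/-- The tangent lift `Tφ(x, v) = (φ(x), Dφ(x)·v)` of a map `φ : ℝⁿ → ℝⁿ`. -/
def Tlift {n : ℕ} (φ : (Fin n → ℝ) → (Fin n → ℝ))
    (p : (Fin n → ℝ) × (Fin n → ℝ)) : (Fin n → ℝ) × (Fin n → ℝ) :=
  (φ p.1, fderiv ℝ φ p.1 p.2)

/-!
`Tφ(U)` is open since it is the preimage of `U` under the continuous map `T(φ⁻¹) = (Tφ)⁻¹`,
and `R_φ(y, 0) = (y, y)` is immediate from `T(φ⁻¹)(y, 0) = (φ⁻¹ y, 0)`. For the derivative condition,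
put `x = φ⁻¹ y` and `A = D(φ⁻¹)(y)`: because `R(x, 0) = (x, x)` lies on the diagonal, the chain rule
factors `Dφ(x)` out of the difference, so the derivative of `w ↦ φ(R²(x, A w)) - φ(R¹(x, A w))` at `0`
is `Dφ(x) ∘ D_v(R² - R¹)(x, 0) ∘ A = Dφ(x) ∘ A = id`.
-/

open Function

section Calculus

variable {𝕜 : Type*} [NontriviallyNormedField 𝕜]
  {E F : Type*} [NormedAddCommGroup E] [NormedSpace 𝕜 E] [NormedAddCommGroup F] [NormedSpace 𝕜 F]

theorem fderiv_comp_fderiv_eq_id_of_leftInverse {f : E → F} {g : F → E} {x : E}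
    (hg : DifferentiableAt 𝕜 g (f x)) (hf : DifferentiableAt 𝕜 f x) (hgf : LeftInverse g f) :
    (fderiv 𝕜 g (f x)).comp (fderiv 𝕜 f x) = ContinuousLinearMap.id 𝕜 E := by
  rw [← fderiv_comp x hg hf, hgf.comp_eq_id, fderiv_id]

theorem HasFDerivAt.comp_sub_comp_of_eq {φ : E → F} {B : E →L[𝕜] F} {x : E}
    {g₁ g₂ : F → E} {L₁ L₂ : F →L[𝕜] E} {w : F} (hφ : HasFDerivAt φ B x)
    (hg₁ : HasFDerivAt g₁ L₁ w) (hg₂ : HasFDerivAt g₂ L₂ w) (h₁ : g₁ w = x) (h₂ : g₂ w = x) :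
    HasFDerivAt (fun v => φ (g₂ v) - φ (g₁ v)) (B.comp (L₂ - L₁)) w := by
  rw [ContinuousLinearMap.comp_sub]
  exact ((h₂ ▸ hφ).comp w hg₂).sub ((h₁ ▸ hφ).comp w hg₁)

theorem hasFDerivAt_conj_sub_eq_id {g : E → E × E} {x : E} (hg : DifferentiableAt 𝕜 g 0)
    (hg0 : g 0 = (x, x))
    (hgid : fderiv 𝕜 (fun v => (g v).2 - (g v).1) 0 = ContinuousLinearMap.id 𝕜 E)
    {φ : E → F} {B : E →L[𝕜] F} (hφ : HasFDerivAt φ B x) {A : F →L[𝕜] E}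
    (hBA : B.comp A = ContinuousLinearMap.id 𝕜 F) :
    HasFDerivAt (fun w => φ (g (A w)).2 - φ (g (A w)).1) (ContinuousLinearMap.id 𝕜 F) 0 := by
  set L := fderiv 𝕜 g 0
  have hL : HasFDerivAt g L (A 0) := by simpa using hg.hasFDerivAt
  have hgA : HasFDerivAt (fun w => g (A w)) (L.comp A) 0 := hL.comp 0 A.hasFDerivAt
  have hLid : (ContinuousLinearMap.snd 𝕜 E E).comp L - (ContinuousLinearMap.fst 𝕜 E E).comp L
      = ContinuousLinearMap.id 𝕜 E :=
    (hg.hasFDerivAt.snd.sub hg.hasFDerivAt.fst).fderiv.symm.trans hgid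
  convert hφ.comp_sub_comp_of_eq hgA.fst hgA.snd (by simp [hg0]) (by simp [hg0]) using 1
  rw [← ContinuousLinearMap.comp_assoc, ← ContinuousLinearMap.comp_assoc,
    ← ContinuousLinearMap.sub_comp, hLid, ContinuousLinearMap.id_comp, hBA]

end Calculus

section TangentLift

variable {n : ℕ} {φ φinv : (Fin n → ℝ) → (Fin n → ℝ)}

@[simp]
theorem Tlift_zero (x : Fin n → ℝ) : Tlift φ (x, 0) = (φ x, 0) := by
  simp [Tlift]

theorem continuous_Tlift (hφ : ContDiff ℝ 1 φ) : Continuous (Tlift φ) :=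
  (hφ.continuous.comp continuous_fst).prodMk
    ((hφ.continuous_fderiv one_ne_zero).comp continuous_fst |>.clm_apply continuous_snd)

theorem Tlift_leftInverse (hφ : Differentiable ℝ φ) (hφinv : Differentiable ℝ φinv)
    (hli : LeftInverse φinv φ) : LeftInverse (Tlift φinv) (Tlift φ) := fun p => by
  refine Prod.ext (hli p.1) ?_
  change ((fderiv ℝ φinv (φ p.1)).comp (fderiv ℝ φ p.1)) p.2 = p.2
  rw [fderiv_comp_fderiv_eq_id_of_leftInverse (hφinv _) (hφ _) hli,
    ContinuousLinearMap.id_apply]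

end TangentLift

/-- if `R` is a C¹ discretization map on `U` and `φ` is a C¹
diffeomorphism (with C¹ inverse `φinv`), then the lifted map
`R_φ = (φ × φ) ∘ R ∘ (Tφ)⁻¹` (where `(Tφ)⁻¹ = T(φ⁻¹)`) is a discretization map
on the open set `Tφ(U)`. -/
theorem lifted_map_is_discretizationMap
    {n : ℕ} (U : Set ((Fin n → ℝ) × (Fin n → ℝ)))
    (R : (Fin n → ℝ) × (Fin n → ℝ) → (Fin n → ℝ) × (Fin n → ℝ))
    (hR : IsDiscretizationMap n U R)
    (hRC1 : ContDiffOn ℝ 1 R U)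
    (φ φinv : (Fin n → ℝ) → (Fin n → ℝ))
    (hφ : ContDiff ℝ 1 φ) (hφinv : ContDiff ℝ 1 φinv)
    (hli : Function.LeftInverse φinv φ)
    (hri : Function.RightInverse φinv φ) :
    IsDiscretizationMap n (Tlift φ '' U)
      (fun p : (Fin n → ℝ) × (Fin n → ℝ) =>
        (φ ((R (Tlift φinv p)).1), φ ((R (Tlift φinv p)).2))) := by
  obtain ⟨hUopen, hU0, hR0, hRid⟩ := hR
  have hφd := hφ.differentiable one_ne_zero
  have hφinvd := hφinv.differentiable one_ne_zero
  refine ⟨?_, fun y => ⟨(φinv y, 0), hU0 _, by simp [hri y]⟩, fun y => by simp [hR0, hri y], ?_⟩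
  · rw [Set.image_eq_preimage_of_inverse (Tlift_leftInverse hφd hφinvd hli)
      (Tlift_leftInverse hφinvd hφd hri)]
    exact hUopen.preimage (continuous_Tlift hφinv)
  · intro y
    have hRx : DifferentiableAt ℝ (fun v => R (φinv y, v)) 0 :=
      ((hRC1.differentiableOn one_ne_zero).differentiableAt (hUopen.mem_nhds (hU0 _))).comp 0
        (differentiableAt_const _ |>.prodMk differentiableAt_id)
    exact (hasFDerivAt_conj_sub_eq_id hRx (hR0 _) (hRid _) (hφd _).hasFDerivAt
      (fderiv_comp_fderiv_eq_id_of_leftInverse (hφd _) (hφinvd _) hri)).fderiv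
end
end

section
/- Let R = (R¹, R²) : U → ℝⁿ × ℝⁿ be a discretization map on ℝⁿ that is symmetric (R = R*, where R*(x, v) := (R²(x, −v), R¹(x, −v))), and let φ : ℝⁿ → ℝⁿ be a C¹ diffeomorphism. Then the lifted map R_φ := (φ × φ) ∘ R ∘ (Tφ)⁻¹, defined on Tφ(U) with Tφ(x, v) := (φ(x), Dφ(x)·v), is also symmetric: R_φ = (R_φ)*. -/
open Topology

noncomputable section

/-- The adjoint `S*(x, v) = (S²(x, −v), S¹(x, −v))` of a map `S : ℝⁿ × ℝⁿ → ℝⁿ × ℝⁿ`. -/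
def adjointMap {n : ℕ}
    (S : (Fin n → ℝ) × (Fin n → ℝ) → (Fin n → ℝ) × (Fin n → ℝ))
    (p : (Fin n → ℝ) × (Fin n → ℝ)) : (Fin n → ℝ) × (Fin n → ℝ) :=
  ((S (p.1, -p.2)).2, (S (p.1, -p.2)).1)

/-! Since `Dφ(x)` is linear, `Tφ` commutes with the flip `(x, v) ↦ (x, -v)`, and by the chain rule
`Tφ⁻¹ ∘ Tφ = id`. Hence `R_φ (Tφ q) = (φ × φ) (R q)` and `R_φ* (Tφ q) = (φ × φ) (R* q)`, so symmetry of
`R` transfers to `R_φ`. -/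

theorem Tlift_neg_snd {n : ℕ} (φ : (Fin n → ℝ) → (Fin n → ℝ)) (p : (Fin n → ℝ) × (Fin n → ℝ)) :
    Tlift φ (p.1, -p.2) = ((Tlift φ p).1, -(Tlift φ p).2) := by
  simp [Tlift]

theorem Tlift_leftInverse_s5 {n : ℕ} {φ ψ : (Fin n → ℝ) → (Fin n → ℝ)}
    (hφ : Differentiable ℝ φ) (hψ : Differentiable ℝ ψ) (h : Function.LeftInverse ψ φ) :
    Function.LeftInverse (Tlift ψ) (Tlift φ) := by
  rintro ⟨x, v⟩
  have hchain : (fderiv ℝ ψ (φ x)).comp (fderiv ℝ φ x) = ContinuousLinearMap.id ℝ _ := by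
    rw [← fderiv_comp x (hψ _) (hφ x), show ψ ∘ φ = id from funext h, fderiv_id]
  simp [Tlift, h x, ← ContinuousLinearMap.comp_apply, hchain]

theorem lift_of_symmetric_is_symmetric_general
    {n : ℕ} (U : Set ((Fin n → ℝ) × (Fin n → ℝ)))
    (R : (Fin n → ℝ) × (Fin n → ℝ) → (Fin n → ℝ) × (Fin n → ℝ))
    (hsym : ∀ p ∈ U, R p = adjointMap R p)
    (φ φinv : (Fin n → ℝ) → (Fin n → ℝ))
    (hφ : ContDiff ℝ 1 φ) (hφinv : ContDiff ℝ 1 φinv)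
    (hli : Function.LeftInverse φinv φ) :
    ∀ p ∈ Tlift φ '' U,
      (φ ((R (Tlift φinv p)).1), φ ((R (Tlift φinv p)).2))
        = adjointMap
            (fun q : (Fin n → ℝ) × (Fin n → ℝ) =>
              (φ ((R (Tlift φinv q)).1), φ ((R (Tlift φinv q)).2))) p := by
  rintro _ ⟨q, hqU, rfl⟩
  have hT : Function.LeftInverse (Tlift φinv) (Tlift φ) :=
    Tlift_leftInverse_s5 (hφ.differentiable one_ne_zero) (hφinv.differentiable one_ne_zero) hli
  simp only [adjointMap, ← Tlift_neg_snd, hT q, hT (q.1, -q.2), hsym q hqU]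

/-- if `R` is a symmetric discretization map (`R = R*`, in particular
`U = U*`) and `φ` is a C¹ diffeomorphism, then the lifted map
`R_φ = (φ × φ) ∘ R ∘ (Tφ)⁻¹` is also symmetric on its domain `Tφ(U)`. -/
theorem lift_of_symmetric_is_symmetric
    {n : ℕ} (U : Set ((Fin n → ℝ) × (Fin n → ℝ)))
    (R : (Fin n → ℝ) × (Fin n → ℝ) → (Fin n → ℝ) × (Fin n → ℝ))
    (hR : IsDiscretizationMap n U R)
    (hUsym : ∀ p : (Fin n → ℝ) × (Fin n → ℝ), p ∈ U ↔ (p.1, -p.2) ∈ U)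
    (hsym : ∀ p ∈ U, R p = adjointMap R p)
    (φ φinv : (Fin n → ℝ) → (Fin n → ℝ))
    (hφ : ContDiff ℝ 1 φ) (hφinv : ContDiff ℝ 1 φinv)
    (hli : Function.LeftInverse φinv φ)
    (hri : Function.RightInverse φinv φ) :
    ∀ p ∈ Tlift φ '' U,
      (φ ((R (Tlift φinv p)).1), φ ((R (Tlift φinv p)).2))
        = adjointMap
            (fun q : (Fin n → ℝ) × (Fin n → ℝ) =>
              (φ ((R (Tlift φinv q)).1), φ ((R (Tlift φinv q)).2))) p :=
  lift_of_symmetric_is_symmetric_general U R hsym φ φinv hφ hφinv hli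
end
end

section
/- Let R : U → ℝⁿ × ℝⁿ be a discretization map on ℝⁿ, let φ : ℝⁿ → ℝⁿ be a C¹ diffeomorphism with tangent lift Tφ(x, v) := (φ(x), Dφ(x)·v), and define the lifted discretization map R_{φ⁻¹} := (φ⁻¹ × φ⁻¹) ∘ R ∘ Tφ on (Tφ)⁻¹(U). Let X : ℝⁿ × ℝᵐ → ℝⁿ be a control vector field and define its pushforward X_φ(y, u) := Dφ(φ⁻¹(y)) · X(φ⁻¹(y), u). Then for all x, x' ∈ ℝⁿ, u ∈ ℝᵐ and h ∈ ℝ, the following are equivalent: (a) there exists (z, v) ∈ (Tφ)⁻¹(U) with R_{φ⁻¹}(z, v) = (x, x') and v = h·X(z, u); (b) there exists (w, s) ∈ U with R(w, s) = (φ(x), φ(x')) and s = h·X_φ(w, u). Moreover, in this case one may take (w, s) = Tφ(z, v). -/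
open Topology

noncomputable section

/-! The tangent lift sends a witness `(z, h • X z u)` of the lifted scheme to
`(φ z, h • Dφ(z) (X z u))`, a witness of the pushforward scheme at `w = φ z` by linearity of
`Dφ(z)`; conversely `(φ⁻¹ w, h • X (φ⁻¹ w) u)` is lifted to `(w, s)`. The conditions on `R` then
correspond because `φ` is a bijection with inverse `φ⁻¹`. -/

theorem Prod.mk_eq_iff_of_inverse {α β : Type*} {f : α → β} {g : β → α}
    (hli : Function.LeftInverse g f) (hri : Function.RightInverse g f) {a b : β} {x x' : α} :
    (g a, g b) = (x, x') ↔ (a, b) = (f x, f x') :=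
  let e : α ≃ β := ⟨f, g, hli, hri⟩
  (e.prodCongr e).symm_apply_eq (x := (a, b)) (y := (x, x'))

section TangentLift

variable {n : ℕ} (φ : (Fin n → ℝ) → (Fin n → ℝ))

theorem Tlift_smul (z v : Fin n → ℝ) (c : ℝ) :
    Tlift φ (z, c • v) = (φ z, c • fderiv ℝ φ z v) := by
  simp only [Tlift, map_smul]

theorem Tlift_smul_of_rightInverse {φinv : (Fin n → ℝ) → (Fin n → ℝ)}
    (hri : Function.RightInverse φinv φ) (w v : Fin n → ℝ) (c : ℝ) :
    Tlift φ (φinv w, c • v) = (w, c • fderiv ℝ φ (φinv w) v) := by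
  rw [Tlift_smul, hri w]

end TangentLift

theorem lifted_scheme_iff_pushforward_scheme_general
    {n m : ℕ} (U : Set ((Fin n → ℝ) × (Fin n → ℝ)))
    (R : (Fin n → ℝ) × (Fin n → ℝ) → (Fin n → ℝ) × (Fin n → ℝ))
    (φ φinv : (Fin n → ℝ) → (Fin n → ℝ))
    (hli : Function.LeftInverse φinv φ)
    (hri : Function.RightInverse φinv φ)
    (X : (Fin n → ℝ) → (Fin m → ℝ) → (Fin n → ℝ)) :
    ∀ (x x' : Fin n → ℝ) (u : Fin m → ℝ) (h : ℝ),
      ((∃ z v : Fin n → ℝ, Tlift φ (z, v) ∈ U ∧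
          (φinv ((R (Tlift φ (z, v))).1), φinv ((R (Tlift φ (z, v))).2)) = (x, x') ∧
          v = h • X z u)
        ↔
        (∃ w s : Fin n → ℝ, (w, s) ∈ U ∧ R (w, s) = (φ x, φ x') ∧
          s = h • fderiv ℝ φ (φinv w) (X (φinv w) u)))
      ∧
      (∀ z v : Fin n → ℝ, Tlift φ (z, v) ∈ U →
        (φinv ((R (Tlift φ (z, v))).1), φinv ((R (Tlift φ (z, v))).2)) = (x, x') →
        v = h • X z u →
        R (Tlift φ (z, v)) = (φ x, φ x') ∧
        (Tlift φ (z, v)).2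
          = h • fderiv ℝ φ (φinv ((Tlift φ (z, v)).1)) (X (φinv ((Tlift φ (z, v)).1)) u)) := by
  intro x x' u h
  have lift_witness : ∀ z v : Fin n → ℝ, Tlift φ (z, v) ∈ U →
      (φinv ((R (Tlift φ (z, v))).1), φinv ((R (Tlift φ (z, v))).2)) = (x, x') →
      v = h • X z u →
      R (Tlift φ (z, v)) = (φ x, φ x') ∧
      (Tlift φ (z, v)).2
        = h • fderiv ℝ φ (φinv ((Tlift φ (z, v)).1)) (X (φinv ((Tlift φ (z, v)).1)) u) := by
    rintro z v - hxx rfl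
    exact ⟨(Prod.mk_eq_iff_of_inverse hli hri).1 hxx, by simp only [Tlift_smul, hli z]⟩
  refine ⟨⟨fun ⟨z, v, hU, hxx, hv⟩ =>
    ⟨(Tlift φ (z, v)).1, (Tlift φ (z, v)).2, hU, lift_witness z v hU hxx hv⟩, ?_⟩, lift_witness⟩
  rintro ⟨w, s, hU, hRw, rfl⟩
  have hT := Tlift_smul_of_rightInverse φ hri w (X (φinv w) u) h
  refine ⟨φinv w, _, hT ▸ hU, ?_, rfl⟩
  rw [hT]
  exact (Prod.mk_eq_iff_of_inverse hli hri).2 hRw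

/-- the implicit discretization scheme of the control vector field `X` by
the lifted map `R_{φ⁻¹} = (φ⁻¹ × φ⁻¹) ∘ R ∘ Tφ` on `(Tφ)⁻¹(U)` relates `(x, x')` iff the
scheme of the pushforward field `X_φ(y,u) = Dφ(φ⁻¹ y)·X(φ⁻¹ y, u)` by `R` on `U` relates
`(φ x, φ x')`; moreover one may take the witness `(w, s) = Tφ(z, v)`. -/
theorem lifted_scheme_iff_pushforward_scheme
    {n m : ℕ} (U : Set ((Fin n → ℝ) × (Fin n → ℝ)))
    (R : (Fin n → ℝ) × (Fin n → ℝ) → (Fin n → ℝ) × (Fin n → ℝ))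
    (hR : IsDiscretizationMap n U R)
    (φ φinv : (Fin n → ℝ) → (Fin n → ℝ))
    (hφ : ContDiff ℝ 1 φ) (hφinv : ContDiff ℝ 1 φinv)
    (hli : Function.LeftInverse φinv φ)
    (hri : Function.RightInverse φinv φ)
    (X : (Fin n → ℝ) → (Fin m → ℝ) → (Fin n → ℝ)) :
    ∀ (x x' : Fin n → ℝ) (u : Fin m → ℝ) (h : ℝ),
      ((∃ z v : Fin n → ℝ, Tlift φ (z, v) ∈ U ∧
          (φinv ((R (Tlift φ (z, v))).1), φinv ((R (Tlift φ (z, v))).2)) = (x, x') ∧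
          v = h • X z u)
        ↔
        (∃ w s : Fin n → ℝ, (w, s) ∈ U ∧ R (w, s) = (φ x, φ x') ∧
          s = h • fderiv ℝ φ (φinv w) (X (φinv w) u)))
      ∧
      (∀ z v : Fin n → ℝ, Tlift φ (z, v) ∈ U →
        (φinv ((R (Tlift φ (z, v))).1), φinv ((R (Tlift φ (z, v))).2)) = (x, x') →
        v = h • X z u →
        R (Tlift φ (z, v)) = (φ x, φ x') ∧
        (Tlift φ (z, v)).2
          = h • fderiv ℝ φ (φinv ((Tlift φ (z, v)).1)) (X (φinv ((Tlift φ (z, v)).1)) u)) :=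
  lifted_scheme_iff_pushforward_scheme_general U R φ φinv hli hri X
end
end

section
/- (Feedback linearizable discretization.) Let φ : ℝⁿ → ℝⁿ be a C¹ diffeomorphism, ψ : ℝⁿ × ℝᵐ → ℝᵐ a map, X : ℝⁿ × ℝᵐ → ℝⁿ a control vector field, and A ∈ ℝⁿˣⁿ, B ∈ ℝⁿˣᵐ matrices such that Dφ(x)·X(x, u) = A·φ(x) + B·ψ(x, u) for all x ∈ ℝⁿ, u ∈ ℝᵐ (feedback linearization of the continuous system). Let R : U → ℝⁿ × ℝⁿ be a discretization map on ℝⁿ, h ∈ ℝ, and A_h ∈ ℝⁿˣⁿ, B_h ∈ ℝⁿˣᵐ matrices such that R preserves linearity: for all (w, s) ∈ U, y, y' ∈ ℝⁿ and v ∈ ℝᵐ, if R(w, s) = (y, y') and s = h·(A·w + B·v), then y' = A_h·y + B_h·v. Then the discretization of the nonlinear system by the lifted map R_{φ⁻¹} := (φ⁻¹ × φ⁻¹) ∘ R ∘ Tφ is feedback linearizable: for all x_k, x_{k+1} ∈ ℝⁿ, u_k ∈ ℝᵐ and (z, v₀) ∈ (Tφ)⁻¹(U), if R_{φ⁻¹}(z,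 v₀) = (x_k, x_{k+1}) and v₀ = h·X(z, u_k), then φ(x_{k+1}) = A_h·φ(x_k) + B_h·ψ(z, u_k). -/
/-!
Conjugating by `φ` turns the discretization of the nonlinear system into that of the linear one:
the tangent lift sends the direction `h • X(z, u)` to `h • (A φ(z) + B ψ(z, u))`, so linearity
preservation of `R` applies at the point `φ(z)`, and `φ` undoes the outer `φ⁻¹ × φ⁻¹`.
-/

open Topology

noncomputable section

theorem Prod.map_eq_of_rightInverse {α β : Type*} {f : α → β} {g : β → α}
    (hfg : Function.RightInverse g f) {p : β × β} {q : α × α} (h : Prod.map g g p = q) :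
    Prod.map f f q = p := by
  rw [← h, Prod.map_map, hfg.comp_eq_id, Prod.map_id, id]

theorem Tlift_smul_of_feedback_linearization {n m : ℕ} {φ : (Fin n → ℝ) → (Fin n → ℝ)}
    {ψ : (Fin n → ℝ) → (Fin m → ℝ) → (Fin m → ℝ)} {X : (Fin n → ℝ) → (Fin m → ℝ) → (Fin n → ℝ)}
    {A : Matrix (Fin n) (Fin n) ℝ} {B : Matrix (Fin n) (Fin m) ℝ}
    (hfblin : ∀ x u, fderiv ℝ φ x (X x u) = A.mulVec (φ x) + B.mulVec (ψ x u))
    (h : ℝ) (z : Fin n → ℝ) (u : Fin m → ℝ) :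
    Tlift φ (z, h • X z u) = (φ z, h • (A.mulVec (φ z) + B.mulVec (ψ z u))) := by
  rw [Tlift, map_smul, hfblin]

theorem lifted_discretization_is_feedback_linearizable_general
    {n m : ℕ} (U : Set ((Fin n → ℝ) × (Fin n → ℝ)))
    (R : (Fin n → ℝ) × (Fin n → ℝ) → (Fin n → ℝ) × (Fin n → ℝ))
    (φ φinv : (Fin n → ℝ) → (Fin n → ℝ))
    (hri : Function.RightInverse φinv φ)
    (ψ : (Fin n → ℝ) → (Fin m → ℝ) → (Fin m → ℝ))
    (X : (Fin n → ℝ) → (Fin m → ℝ) → (Fin n → ℝ))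
    (A : Matrix (Fin n) (Fin n) ℝ) (B : Matrix (Fin n) (Fin m) ℝ)
    (hfblin : ∀ (x : Fin n → ℝ) (u : Fin m → ℝ),
      fderiv ℝ φ x (X x u) = A.mulVec (φ x) + B.mulVec (ψ x u))
    (h : ℝ)
    (Ah : Matrix (Fin n) (Fin n) ℝ) (Bh : Matrix (Fin n) (Fin m) ℝ)
    (hpres : ∀ (w s y y' : Fin n → ℝ) (v : Fin m → ℝ),
      (w, s) ∈ U → R (w, s) = (y, y') → s = h • (A.mulVec w + B.mulVec v) →
      y' = Ah.mulVec y + Bh.mulVec v) :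
    ∀ (xk xk1 : Fin n → ℝ) (uk : Fin m → ℝ) (z v₀ : Fin n → ℝ),
      Tlift φ (z, v₀) ∈ U →
      (φinv ((R (Tlift φ (z, v₀))).1), φinv ((R (Tlift φ (z, v₀))).2)) = (xk, xk1) →
      v₀ = h • X z uk →
      φ xk1 = Ah.mulVec (φ xk) + Bh.mulVec (ψ z uk) := by
  rintro xk xk1 uk z v₀ hU hx rfl
  have hφx : (φ xk, φ xk1) = R (Tlift φ (z, h • X z uk)) := Prod.map_eq_of_rightInverse hri hx
  rw [Tlift_smul_of_feedback_linearization hfblin] at hU hφx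
  exact hpres _ _ _ _ _ hU hφx.symm rfl

/-- Feedback linearizable discretization: if the continuous control system
`ẋ = X(x,u)` is feedback linearized by `(φ, ψ, A, B)`, i.e. `Dφ(x)·X(x,u) = A·φ(x) + B·ψ(x,u)`,
and `R` is a discretization map preserving linearity at stepsize `h` (with matrices `A_h, B_h`),
then the discretization of the nonlinear system by the lifted map
`R_{φ⁻¹} = (φ⁻¹ × φ⁻¹) ∘ R ∘ Tφ` is feedback linearizable:
`φ(x_{k+1}) = A_h·φ(x_k) + B_h·ψ(z, u_k)`. -/
theorem lifted_discretization_is_feedback_linearizable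
    {n m : ℕ} (U : Set ((Fin n → ℝ) × (Fin n → ℝ)))
    (R : (Fin n → ℝ) × (Fin n → ℝ) → (Fin n → ℝ) × (Fin n → ℝ))
    (hR : IsDiscretizationMap n U R)
    (φ φinv : (Fin n → ℝ) → (Fin n → ℝ))
    (hφ : ContDiff ℝ 1 φ) (hφinv : ContDiff ℝ 1 φinv)
    (hli : Function.LeftInverse φinv φ)
    (hri : Function.RightInverse φinv φ)
    (ψ : (Fin n → ℝ) → (Fin m → ℝ) → (Fin m → ℝ))
    (X : (Fin n → ℝ) → (Fin m → ℝ) → (Fin n → ℝ))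
    (A : Matrix (Fin n) (Fin n) ℝ) (B : Matrix (Fin n) (Fin m) ℝ)
    (hfblin : ∀ (x : Fin n → ℝ) (u : Fin m → ℝ),
      fderiv ℝ φ x (X x u) = A.mulVec (φ x) + B.mulVec (ψ x u))
    (h : ℝ)
    (Ah : Matrix (Fin n) (Fin n) ℝ) (Bh : Matrix (Fin n) (Fin m) ℝ)
    (hpres : ∀ (w s y y' : Fin n → ℝ) (v : Fin m → ℝ),
      (w, s) ∈ U → R (w, s) = (y, y') → s = h • (A.mulVec w + B.mulVec v) →
      y' = Ah.mulVec y + Bh.mulVec v) :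
    ∀ (xk xk1 : Fin n → ℝ) (uk : Fin m → ℝ) (z v₀ : Fin n → ℝ),
      Tlift φ (z, v₀) ∈ U →
      (φinv ((R (Tlift φ (z, v₀))).1), φinv ((R (Tlift φ (z, v₀))).2)) = (xk, xk1) →
      v₀ = h • X z uk →
      φ xk1 = Ah.mulVec (φ xk) + Bh.mulVec (ψ z uk) :=
  lifted_discretization_is_feedback_linearizable_general U R φ φinv hri ψ X A B hfblin h Ah Bh hpres
end
end

section
/- (Feedback linearizability of the adjoint discretization.) Let φ : ℝⁿ → ℝⁿ be a C¹ diffeomorphism, ψ : ℝⁿ × ℝᵐ → ℝᵐ, X : ℝⁿ × ℝᵐ → ℝⁿ, and A ∈ ℝⁿˣⁿ, B ∈ ℝⁿˣᵐ matrices such that Dφ(x)·X(x, u) = A·φ(x) + B·ψ(x, u) for all x, u. Let R : U → ℝⁿ × ℝⁿ be a discretization map on ℝⁿ, h ∈ ℝ, and suppose R preserves linearity at stepsize −h: there exist matrices A_{−h} ∈ ℝⁿˣⁿ and B_{−h} ∈ ℝⁿˣᵐ such that for all (w, s) ∈ U, y, y' ∈ ℝⁿ and v ∈ ℝᵐ,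 if R(w, s) = (y, y') and s = −h·(A·w + B·v), then y' = A_{−h}·y + B_{−h}·v. Let R* be the adjoint of R and R*_{φ⁻¹} := (φ⁻¹ × φ⁻¹) ∘ R* ∘ Tφ. Then for all x_k, x_{k+1} ∈ ℝⁿ, u_k ∈ ℝᵐ and (z, v₀) with Tφ(z, v₀) ∈ U*, if R*_{φ⁻¹}(z, v₀) = (x_k, x_{k+1}) and v₀ = h·X(z, u_k), then φ(x_k) = A_{−h}·φ(x_{k+1}) + B_{−h}·ψ(z, u_k). -/
/-! By feedback linearization the lifted velocity `Dφ(z)·(h X(z, u))` equals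
`h (A φ(z) + B ψ(z, u))`, so `R*` evaluated at `Tφ(z, v₀)` is `R` evaluated at stepsize `-h` on the
linear field `A w + B v`, with its two outputs swapped. Linearity preservation of `R` at `-h` is
therefore a backward recursion for the adjoint, and `φ ∘ φ⁻¹ = id` transports it to `φ(x_k)`. -/

open Topology

noncomputable section

theorem adjointMap_fst_eq_of_preserves_linearity {n m : ℕ}
    {U : Set ((Fin n → ℝ) × (Fin n → ℝ))}
    {R : (Fin n → ℝ) × (Fin n → ℝ) → (Fin n → ℝ) × (Fin n → ℝ)}
    {A Amh : Matrix (Fin n) (Fin n) ℝ} {B Bmh : Matrix (Fin n) (Fin m) ℝ} {h : ℝ}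
    (hpres : ∀ (w s y y' : Fin n → ℝ) (v : Fin m → ℝ),
      (w, s) ∈ U → R (w, s) = (y, y') → s = (-h) • (A.mulVec w + B.mulVec v) →
      y' = Amh.mulVec y + Bmh.mulVec v)
    {w : Fin n → ℝ} {v : Fin m → ℝ} (hw : (w, -(h • (A.mulVec w + B.mulVec v))) ∈ U) :
    (adjointMap R (w, h • (A.mulVec w + B.mulVec v))).1
      = Amh.mulVec (adjointMap R (w, h • (A.mulVec w + B.mulVec v))).2 + Bmh.mulVec v :=
  hpres _ _ _ _ v hw rfl (neg_smul h _).symm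

theorem adjoint_lifted_discretization_is_feedback_linearizable_general
    {n m : ℕ} (U : Set ((Fin n → ℝ) × (Fin n → ℝ)))
    (R : (Fin n → ℝ) × (Fin n → ℝ) → (Fin n → ℝ) × (Fin n → ℝ))
    (φ φinv : (Fin n → ℝ) → (Fin n → ℝ))
    (hri : Function.RightInverse φinv φ)
    (ψ : (Fin n → ℝ) → (Fin m → ℝ) → (Fin m → ℝ))
    (X : (Fin n → ℝ) → (Fin m → ℝ) → (Fin n → ℝ))
    (A : Matrix (Fin n) (Fin n) ℝ) (B : Matrix (Fin n) (Fin m) ℝ)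
    (hfblin : ∀ (x : Fin n → ℝ) (u : Fin m → ℝ),
      fderiv ℝ φ x (X x u) = A.mulVec (φ x) + B.mulVec (ψ x u))
    (h : ℝ)
    (Amh : Matrix (Fin n) (Fin n) ℝ) (Bmh : Matrix (Fin n) (Fin m) ℝ)
    (hpres : ∀ (w s y y' : Fin n → ℝ) (v : Fin m → ℝ),
      (w, s) ∈ U → R (w, s) = (y, y') → s = (-h) • (A.mulVec w + B.mulVec v) →
      y' = Amh.mulVec y + Bmh.mulVec v) :
    ∀ (xk xk1 : Fin n → ℝ) (uk : Fin m → ℝ) (z v₀ : Fin n → ℝ),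
      Tlift φ (z, v₀) ∈ {p : (Fin n → ℝ) × (Fin n → ℝ) | (p.1, -p.2) ∈ U} →
      (φinv ((adjointMap R (Tlift φ (z, v₀))).1),
        φinv ((adjointMap R (Tlift φ (z, v₀))).2)) = (xk, xk1) →
      v₀ = h • X z uk →
      φ xk = Amh.mulVec (φ xk1) + Bmh.mulVec (ψ z uk) := by
  intro xk xk1 uk z v₀ hmem hstep hv
  rw [hv, Tlift_smul_of_feedback_linearization hfblin] at hmem hstep
  obtain ⟨rfl, rfl⟩ := Prod.mk.inj hstep
  rw [hri, hri]
  exact adjointMap_fst_eq_of_preserves_linearity hpres hmem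

/-- Feedback linearizability of the adjoint discretization: if the
continuous system is feedback linearized by `(φ, ψ, A, B)` and `R` preserves linearity
at stepsize `−h` (with matrices `A₋ₕ, B₋ₕ`), then the discretization by
`R*_{φ⁻¹} = (φ⁻¹ × φ⁻¹) ∘ R* ∘ Tφ` satisfies
`φ(x_k) = A₋ₕ·φ(x_{k+1}) + B₋ₕ·ψ(z, u_k)`. -/
theorem adjoint_lifted_discretization_is_feedback_linearizable
    {n m : ℕ} (U : Set ((Fin n → ℝ) × (Fin n → ℝ)))
    (R : (Fin n → ℝ) × (Fin n → ℝ) → (Fin n → ℝ) × (Fin n → ℝ))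
    (hR : IsDiscretizationMap n U R)
    (φ φinv : (Fin n → ℝ) → (Fin n → ℝ))
    (hφ : ContDiff ℝ 1 φ) (hφinv : ContDiff ℝ 1 φinv)
    (hli : Function.LeftInverse φinv φ)
    (hri : Function.RightInverse φinv φ)
    (ψ : (Fin n → ℝ) → (Fin m → ℝ) → (Fin m → ℝ))
    (X : (Fin n → ℝ) → (Fin m → ℝ) → (Fin n → ℝ))
    (A : Matrix (Fin n) (Fin n) ℝ) (B : Matrix (Fin n) (Fin m) ℝ)
    (hfblin : ∀ (x : Fin n → ℝ) (u : Fin m → ℝ),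
      fderiv ℝ φ x (X x u) = A.mulVec (φ x) + B.mulVec (ψ x u))
    (h : ℝ)
    (Amh : Matrix (Fin n) (Fin n) ℝ) (Bmh : Matrix (Fin n) (Fin m) ℝ)
    (hpres : ∀ (w s y y' : Fin n → ℝ) (v : Fin m → ℝ),
      (w, s) ∈ U → R (w, s) = (y, y') → s = (-h) • (A.mulVec w + B.mulVec v) →
      y' = Amh.mulVec y + Bmh.mulVec v) :
    ∀ (xk xk1 : Fin n → ℝ) (uk : Fin m → ℝ) (z v₀ : Fin n → ℝ),
      Tlift φ (z, v₀) ∈ {p : (Fin n → ℝ) × (Fin n → ℝ) | (p.1, -p.2) ∈ U} →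
      (φinv ((adjointMap R (Tlift φ (z, v₀))).1),
        φinv ((adjointMap R (Tlift φ (z, v₀))).2)) = (xk, xk1) →
      v₀ = h • X z uk →
      φ xk = Amh.mulVec (φ xk1) + Bmh.mulVec (ψ z uk) :=
  adjoint_lifted_discretization_is_feedback_linearizable_general U R φ φinv hri ψ X A B hfblin h Amh
    Bmh hpres
end
end

section
/- (Symmetry of the composed scheme.) Let R = (R¹, R²) : U → ℝⁿ × ℝⁿ be a discretization map on ℝⁿ with adjoint R*(x, v) := (R²(x, −v), R¹(x, −v)) on U* = {(x, v) : (x, −v) ∈ U}, and let X : ℝⁿ → ℝⁿ be a vector field. Fix h ∈ ℝ and x, m, y ∈ ℝⁿ, and suppose there exist (z₁, v₁) ∈ U and (z₂, v₂) ∈ U* with R(z₁, v₁) = (x, m), v₁ = (h/2)·X(z₁), R*(z₂, v₂) = (m, y), v₂ = (h/2)·X(z₂). Then the same data, read backwards with stepsize −h, satisfies the composed scheme from y to x through the same intermediate point m: (z₂, −v₂) ∈ U with R(z₂, −v₂) = (y, m) and −v₂ = (−h/2)·X(z₂), and (z₁, −v₁) ∈ U* with R*(z₁, −v₁) = (m,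 x) and −v₁ = (−h/2)·X(z₁). In other words, the composed discretization given by R⁻¹(x_k, x_{k+1/2}) = (h/2)X(τ(R⁻¹(x_k, x_{k+1/2}))) followed by (R*)⁻¹(x_{k+1/2}, x_{k+1}) = (h/2)X(τ((R*)⁻¹(x_{k+1/2}, x_{k+1}))) is symmetric. -/
open Topology

noncomputable section

def adjointDomain {n : ℕ} (U : Set ((Fin n → ℝ) × (Fin n → ℝ))) :
    Set ((Fin n → ℝ) × (Fin n → ℝ)) :=
  {p | (p.1, -p.2) ∈ U}

/-- `IsHalfStep U S X h a b z v`: the implicit half step `S⁻¹(a, b) = (z, v)`,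
`v = (h/2) X(z)`, of the scheme built on `S : U → ℝⁿ × ℝⁿ`. -/
def IsHalfStep {n : ℕ} (U : Set ((Fin n → ℝ) × (Fin n → ℝ)))
    (S : (Fin n → ℝ) × (Fin n → ℝ) → (Fin n → ℝ) × (Fin n → ℝ))
    (X : (Fin n → ℝ) → (Fin n → ℝ)) (h : ℝ) (a b z v : Fin n → ℝ) : Prop :=
  (z, v) ∈ U ∧ S (z, v) = (a, b) ∧ v = (h / 2) • X z

section Adjoint

variable {n : ℕ}

@[simp]
theorem adjointMap_apply_neg (S : (Fin n → ℝ) × (Fin n → ℝ) → (Fin n → ℝ) × (Fin n → ℝ))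
    (z v : Fin n → ℝ) : adjointMap S (z, -v) = (S (z, v)).swap := by
  simp [adjointMap, Prod.swap]

@[simp]
theorem adjointMap_adjointMap (S : (Fin n → ℝ) × (Fin n → ℝ) → (Fin n → ℝ) × (Fin n → ℝ)) :
    adjointMap (adjointMap S) = S := by
  ext p <;> simp [adjointMap]

@[simp]
theorem neg_mem_adjointDomain_iff (U : Set ((Fin n → ℝ) × (Fin n → ℝ))) (z v : Fin n → ℝ) :
    (z, -v) ∈ adjointDomain U ↔ (z, v) ∈ U := by
  simp [adjointDomain]

@[simp]
theorem adjointDomain_adjointDomain (U : Set ((Fin n → ℝ) × (Fin n → ℝ))) :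
    adjointDomain (adjointDomain U) = U := by
  ext p
  simp [adjointDomain]

end Adjoint

theorem neg_eq_neg_half_smul_of_eq_half_smul {n : ℕ} {h : ℝ} {v w : Fin n → ℝ}
    (hv : v = (h / 2) • w) : -v = (-h / 2) • w := by
  rw [hv, neg_div, neg_smul]

theorem IsHalfStep.adjoint_neg {n : ℕ} {U : Set ((Fin n → ℝ) × (Fin n → ℝ))}
    {S : (Fin n → ℝ) × (Fin n → ℝ) → (Fin n → ℝ) × (Fin n → ℝ)}
    {X : (Fin n → ℝ) → (Fin n → ℝ)} {h : ℝ} {a b z v : Fin n → ℝ}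
    (hs : IsHalfStep U S X h a b z v) :
    IsHalfStep (adjointDomain U) (adjointMap S) X (-h) b a z (-v) := by
  obtain ⟨hU, hS, hv⟩ := hs
  exact ⟨(neg_mem_adjointDomain_iff U z v).2 hU,
    by rw [adjointMap_apply_neg, hS, Prod.swap_prod_mk], neg_eq_neg_half_smul_of_eq_half_smul hv⟩

theorem composed_scheme_is_symmetric_general
    {n : ℕ} (U : Set ((Fin n → ℝ) × (Fin n → ℝ)))
    (R : (Fin n → ℝ) × (Fin n → ℝ) → (Fin n → ℝ) × (Fin n → ℝ))
    (X : (Fin n → ℝ) → (Fin n → ℝ))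
    (h : ℝ) (x m y : Fin n → ℝ)
    (z₁ v₁ z₂ v₂ : Fin n → ℝ)
    (h₁U : (z₁, v₁) ∈ U)
    (h₁R : R (z₁, v₁) = (x, m))
    (h₁v : v₁ = (h / 2) • X z₁)
    (h₂U : (z₂, v₂) ∈ {p : (Fin n → ℝ) × (Fin n → ℝ) | (p.1, -p.2) ∈ U})
    (h₂R : adjointMap R (z₂, v₂) = (m, y))
    (h₂v : v₂ = (h / 2) • X z₂) :
    ((z₂, -v₂) ∈ U ∧ R (z₂, -v₂) = (y, m) ∧ -v₂ = (-h / 2) • X z₂) ∧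
    ((z₁, -v₁) ∈ {p : (Fin n → ℝ) × (Fin n → ℝ) | (p.1, -p.2) ∈ U} ∧
      adjointMap R (z₁, -v₁) = (m, x) ∧ -v₁ = (-h / 2) • X z₁) := by
  have forward : IsHalfStep U R X h x m z₁ v₁ := ⟨h₁U, h₁R, h₁v⟩
  have backward : IsHalfStep (adjointDomain U) (adjointMap R) X h m y z₂ v₂ := ⟨h₂U, h₂R, h₂v⟩
  -- `R** = R` and `U** = U`, so reversing the `R*` half step gives an `R` half step.
  have reversed := backward.adjoint_neg
  rw [adjointDomain_adjointDomain, adjointMap_adjointMap] at reversed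
  exact ⟨reversed, forward.adjoint_neg⟩

/-- Symmetry of the composed scheme: if the half-step scheme by `R` leads
from `x` to the intermediate point `m` and the half-step scheme by `R*` leads from `m`
to `y` (both with stepsize `h/2`), then the same data read backwards with stepsize `−h`
satisfies the composed scheme from `y` to `x` through the same intermediate point `m`;
i.e. the composed discretization is symmetric. -/
theorem composed_scheme_is_symmetric
    {n : ℕ} (U : Set ((Fin n → ℝ) × (Fin n → ℝ)))
    (R : (Fin n → ℝ) × (Fin n → ℝ) → (Fin n → ℝ) × (Fin n → ℝ))
    (hR : IsDiscretizationMap n U R)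
    (X : (Fin n → ℝ) → (Fin n → ℝ))
    (h : ℝ) (x m y : Fin n → ℝ)
    (z₁ v₁ z₂ v₂ : Fin n → ℝ)
    (h₁U : (z₁, v₁) ∈ U)
    (h₁R : R (z₁, v₁) = (x, m))
    (h₁v : v₁ = (h / 2) • X z₁)
    (h₂U : (z₂, v₂) ∈ {p : (Fin n → ℝ) × (Fin n → ℝ) | (p.1, -p.2) ∈ U})
    (h₂R : adjointMap R (z₂, v₂) = (m, y))
    (h₂v : v₂ = (h / 2) • X z₂) :
    ((z₂, -v₂) ∈ U ∧ R (z₂, -v₂) = (y, m) ∧ -v₂ = (-h / 2) • X z₂) ∧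
    ((z₁, -v₁) ∈ {p : (Fin n → ℝ) × (Fin n → ℝ) | (p.1, -p.2) ∈ U} ∧
      adjointMap R (z₁, -v₁) = (m, x) ∧ -v₁ = (-h / 2) • X z₁) :=
  composed_scheme_is_symmetric_general U R X h x m y z₁ v₁ z₂ v₂ h₁U h₁R h₁v h₂U h₂R h₂v
end
end

section
/- (Feedback linearizability of the explicit Euler discretization of the example system.) Fix a ∈ ℝ, a ≠ 0, and h ∈ ℝ. Let φ(x₁, x₂) = (x₁, a·sin x₂) and ψ((x₁, x₂), u) = (−x₁² + u)·a·cos x₂, and define the discrete-time map F((x₁, x₂), u; h) = (x₁ + h·a·sin x₂, arcsin(sin x₂ + h·(−x₁² + u)·cos x₂)). Then for every (x₁, x₂) ∈ ℝ², u ∈ ℝ such that sin x₂ + h·(−x₁² + u)·cos x₂ ∈ [−1, 1], one has φ(F((x₁, x₂), u; h)) = A_h·φ(x₁, x₂) + B_h·ψ((x₁, x₂), u), where A_h is the 2×2 matrix with rows (1, h) and (0, 1) and B_h is the column vector (0, h)ᵀ. That is, the sampled system y_k = φ(x_k), v_k = ψ(x_k, u_k) satisfies the linear recursion y_{1,k+1}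 = y_{1,k} + h·y_{2,k}, y_{2,k+1} = y_{2,k} + h·v_k. -/
theorem example_system_explicitEuler_feedback_linearizable_general (a : ℝ) (h : ℝ) :
    ∀ (x : Fin 2 → ℝ) (u : ℝ),
      Real.sin (x 1) + h * (-(x 0) ^ 2 + u) * Real.cos (x 1) ∈ Set.Icc (-1 : ℝ) 1 →
      (fun y : Fin 2 → ℝ => ![y 0, a * Real.sin (y 1)])
          ![x 0 + h * a * Real.sin (x 1),
            Real.arcsin (Real.sin (x 1) + h * (-(x 0) ^ 2 + u) * Real.cos (x 1))]
        = (!![1, h; 0, 1] : Matrix (Fin 2) (Fin 2) ℝ).mulVec ![x 0, a * Real.sin (x 1)]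
          + (!![0; h] : Matrix (Fin 2) (Fin 1) ℝ).mulVec
              ![(-(x 0) ^ 2 + u) * (a * Real.cos (x 1))] := by
  intro x u hmem
  have sin_arcsin_step := Real.sin_arcsin hmem.1 hmem.2
  ext i
  fin_cases i
  · simp
    ring
  · simp [sin_arcsin_step]
    ring

/-- Feedback linearizability of the explicit Euler discretization of the
example system: for `a ≠ 0` and stepsize `h`, with
`F((x₁,x₂),u;h) = (x₁ + h·a·sin x₂, arcsin(sin x₂ + h·(−x₁² + u)·cos x₂))`,
`φ(x₁,x₂) = (x₁, a sin x₂)` and `ψ((x₁,x₂),u) = (−x₁² + u)·a·cos x₂`, whenever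
`sin x₂ + h·(−x₁² + u)·cos x₂ ∈ [−1,1]` one has
`φ(F(x,u;h)) = A_h·φ(x) + B_h·ψ(x,u)` with `A_h = [[1,h],[0,1]]`, `B_h = [0,h]ᵀ`,
i.e. `y_{1,k+1} = y_{1,k} + h·y_{2,k}` and `y_{2,k+1} = y_{2,k} + h·v_k`. -/
theorem example_system_explicitEuler_feedback_linearizable (a : ℝ) (ha : a ≠ 0) (h : ℝ) :
    ∀ (x : Fin 2 → ℝ) (u : ℝ),
      Real.sin (x 1) + h * (-(x 0) ^ 2 + u) * Real.cos (x 1) ∈ Set.Icc (-1 : ℝ) 1 →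
      (fun y : Fin 2 → ℝ => ![y 0, a * Real.sin (y 1)])
          ![x 0 + h * a * Real.sin (x 1),
            Real.arcsin (Real.sin (x 1) + h * (-(x 0) ^ 2 + u) * Real.cos (x 1))]
        = (!![1, h; 0, 1] : Matrix (Fin 2) (Fin 2) ℝ).mulVec ![x 0, a * Real.sin (x 1)]
          + (!![0; h] : Matrix (Fin 2) (Fin 1) ℝ).mulVec
              ![(-(x 0) ^ 2 + u) * (a * Real.cos (x 1))] :=
  example_system_explicitEuler_feedback_linearizable_general a h
end
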